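/- Every point of PG(3,4) not lying on a hyperbolic quadric H is incident with exactly 6 lines disjoint from H. -/

import Mathlib

/-- The underlying 4-dimensional vector space of `PG(3,F)`. -/
abbrev Vv (F : Type) [Field F] : Type := Fin 4 → F

/-- A point of `PG(3,F)`: a 1-dimensional subspace. -/
def IsPoint (F : Type) [Field F] (W : Submodule F (Vv F)) : Prop :=
  Module.finrank F W = 1

/-- A line of `PG(3,F)`: a 2-dimensional subspace. -/
def IsLine (F : Type) [Field F] (W : Submodule F (Vv F)) : Prop :=
  Module.finrank F W = 2

/-- A plane of `PG(3,F)`: a 3-dimensional subspace. -/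
def IsPlane (F : Type) [Field F] (W : Submodule F (Vv F)) : Prop :=
  Module.finrank F W = 3

/-- `Q` is a nondegenerate quadratic form of plus type (Witt index 2) in 4 variables:
up to an invertible linear change of coordinates it is `x₀x₁ + x₂x₃`. -/
def IsHyperbolicForm (F : Type) [Field F] (Q : Vv F → F) : Prop :=
  ∃ e : Vv F ≃ₗ[F] Vv F, ∀ x, Q x = e x 0 * e x 1 + e x 2 * e x 3

/-- A projective subspace lies on the quadric if `Q` vanishes on it. -/
def OnQuadric (F : Type) [Field F] (Q : Vv F → F) (W : Submodule F (Vv F)) : Prop :=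
  ∀ v ∈ W, Q v = 0

/-!
Write `p = ⟨v⟩`, so `Q v ≠ 0`, and let `B` be the polar form of `Q`. In characteristic 2, `B` is
alternating, and every line `⟨v, u⟩` with `B v u = 0` meets the quadric: `Q (s • v + u) =
s² Q v + Q u` has a root because every element of `𝔽₄` is a square. Every other line through `p`
is `⟨v, u⟩` for exactly the 4 vectors `u` of a coset `u + 𝔽₄ v` with `B v u = 1`, and it misses the
quadric iff `t² Q v + t + Q u` has no root `t`. So 4 times the number of external lines through
`p` is the number of such `u`. After changing coordinates to `x₀x₁ + x₂x₃` and moving to a concrete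
model of `𝔽₄`, enumeration gives 24 of them, hence 6 lines.
-/

/-- `𝔽₄ = 𝔽₂[ω]/(ω² + ω + 1)` as an explicit type, so that finite statements about it are
decidable by evaluation. -/
inductive GF4 : Type
  | zero | one | ω | ωsq
  deriving DecidableEq

namespace GF4

instance : Fintype GF4 :=
  ⟨⟨↑[zero, one, ω, ωsq], by decide⟩, fun x => by cases x <;> decide⟩

def add : GF4 → GF4 → GF4
  | zero, x => x | x, zero => x
  | one, one => zero | one, ω => ωsq | one, ωsq => ω
  | ω, one => ωsq | ω, ω => zero | ω, ωsq => one
  | ωsq, one => ω | ωsq, ω => one | ωsq, ωsq => zero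

def mul : GF4 → GF4 → GF4
  | zero, _ => zero | _, zero => zero
  | one, x => x | x, one => x
  | ω, ω => ωsq | ω, ωsq => one
  | ωsq, ω => one | ωsq, ωsq => ω

def inv : GF4 → GF4
  | zero => zero | one => one | ω => ωsq | ωsq => ω

instance : Zero GF4 := ⟨zero⟩
instance : One GF4 := ⟨one⟩
instance : Add GF4 := ⟨add⟩
instance : Mul GF4 := ⟨mul⟩
instance : Neg GF4 := ⟨id⟩
instance : Inv GF4 := ⟨inv⟩

instance : Field GF4 where
  add_assoc := by decide
  zero_add := by decide
  add_zero := by decide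
  add_comm := by decide
  neg_add_cancel := by decide
  nsmul := nsmulRec
  zsmul := zsmulRec
  left_distrib := by decide
  right_distrib := by decide
  zero_mul := by decide
  mul_zero := by decide
  mul_assoc := by decide
  one_mul := by decide
  mul_one := by decide
  mul_comm := by decide
  exists_pair_ne := ⟨zero, one, by decide⟩
  mul_inv_cancel := by decide
  inv_zero := by decide
  nnqsmul := _
  qsmul := _

theorem card_eq : Fintype.card GF4 = 4 := rfl

instance : CharP GF4 2 := CharTwo.of_one_ne_zero_of_two_eq_zero (by decide) (by decide)

/-- Artin–Schreier over `𝔽₄`: `t² c + t + d` has a root iff the trace `cd + (cd)²` vanishes,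
i.e. iff `cd ∈ {0, 1}`. -/
theorem forall_mul_self_mul_add_add_ne_zero_iff {c : GF4} (hc : c ≠ 0) (d : GF4) :
    (∀ t, t * t * c + t + d ≠ 0) ↔ d * c ≠ 0 ∧ d * c ≠ 1 := by
  revert c d
  decide

end GF4

open Module Submodule

namespace QuadraticMap

variable {K V : Type*} [Field K] [AddCommGroup V] [Module K V] (Q : QuadraticForm K V)

def externalLinesThrough (v : V) : Set (Submodule K V) :=
  {L | finrank K L = 2 ∧ v ∈ L ∧ (Q.comp L.subtype).Anisotropic}

def externalDirections (v : V) : Set V :=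
  {u | polar Q v u = 1 ∧ ∀ t : K, Q (t • v + u) ≠ 0}

theorem map_smul_add (a : K) (v u : V) :
    Q (a • v + u) = a * a * Q v + a * polar Q v u + Q u := by
  rw [QuadraticMap.map_add Q, QuadraticMap.map_smul, polar_smul_left, smul_eq_mul, smul_eq_mul]
  ring

theorem anisotropic_comp_subtype_iff (L : Submodule K V) :
    (Q.comp L.subtype).Anisotropic ↔ ∀ w ∈ L, Q w = 0 → w = 0 := by
  simp [Anisotropic]

theorem ncard_externalDirections_comp {V' : Type*} [AddCommGroup V'] [Module K V']
    (e : V' ≃ₗ[K] V) (v : V') :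
    (externalDirections (Q.comp e.toLinearMap) v).ncard = (externalDirections Q (e v)).ncard := by
  have : externalDirections (Q.comp e.toLinearMap) v = e ⁻¹' externalDirections Q (e v) := by
    ext u
    simp [externalDirections, polar]
  rw [this, Set.ncard_preimage_of_injective_subset_range e.injective (by simp)]

variable [CharP K 2]

theorem polar_self_eq_zero (v : V) : polar Q v v = 0 := by
  rw [polar_self, two_nsmul, CharTwo.add_self_eq_zero]

theorem polar_smul_self_add (a : K) (v u : V) : polar Q v (a • v + u) = polar Q v u := by
  rw [polar_add_right, polar_smul_right, polar_self_eq_zero, smul_zero, zero_add]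

variable {Q}

theorem linearIndependent_pair_of_polar_eq_one {v u : V} (h : polar Q v u = 1) :
    LinearIndependent K ![v, u] := by
  rw [LinearIndependent.pair_iff]
  intro s t hst
  have ht : t = 0 := by
    simpa [polar_smul_right, h] using
      (polar_smul_self_add Q s v (t • u)).symm.trans (congrArg (polar Q v) hst)
  have hv : v ≠ 0 := by rintro rfl; simp [polar_zero_left] at h
  subst ht
  simpa [hv] using hst

theorem finrank_span_pair_of_polar_eq_one {v u : V} (h : polar Q v u = 1) :
    finrank K (span K {v, u}) = 2 := by
  rw [← Matrix.range_cons_cons_empty v u ![]]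
  simpa using finrank_span_eq_card (linearIndependent_pair_of_polar_eq_one h)

theorem span_pair_eq_iff_mem {v u : V} {L : Submodule K V} (hL : finrank K L = 2) (hvL : v ∈ L)
    (h : polar Q v u = 1) : span K {v, u} = L ↔ u ∈ L := by
  refine ⟨fun hspan => hspan ▸ subset_span (by simp), fun huL => ?_⟩
  have : FiniteDimensional K L := Module.finite_of_finrank_pos (by omega)
  refine eq_of_le_of_finrank_eq ?_ (by rw [finrank_span_pair_of_polar_eq_one h, hL])
  rw [span_le]
  rintro x (rfl | rfl) <;> assumption

theorem anisotropic_span_pair_iff {v u : V} (hv : Q v ≠ 0) (h : polar Q v u = 1) :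
    (Q.comp (span K {v, u}).subtype).Anisotropic ↔ ∀ t : K, Q (t • v + u) ≠ 0 := by
  rw [anisotropic_comp_subtype_iff]
  constructor
  · intro hani t hQ
    have hpolar := congrArg (polar Q v) (hani _ (add_mem (smul_mem _ t (subset_span (by simp)))
      (subset_span (by simp))) hQ)
    rw [polar_smul_self_add, h, polar_zero_right] at hpolar
    exact one_ne_zero hpolar
  · intro hext w hw hQw
    obtain ⟨a, b, rfl⟩ := mem_span_pair.1 hw
    rcases eq_or_ne b 0 with rfl | hb
    · simp_all [QuadraticMap.map_smul]
    · refine absurd ?_ (hext (b⁻¹ * a))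
      have : a • v + b • u = b • ((b⁻¹ * a) • v + u) := by
        rw [smul_add, smul_smul, mul_inv_cancel_left₀ hb]
      rwa [this, QuadraticMap.map_smul, smul_eq_mul, mul_eq_zero, or_iff_right (by simpa)] at hQw

theorem mem_externalDirections_iff {v u : V} (hv : Q v ≠ 0) :
    u ∈ externalDirections Q v ↔ polar Q v u = 1 ∧ span K {v, u} ∈ externalLinesThrough Q v := by
  refine ⟨fun ⟨h, hext⟩ => ⟨h, finrank_span_pair_of_polar_eq_one h, subset_span (by simp),
    (anisotropic_span_pair_iff hv h).2 hext⟩, fun ⟨h, _, _, hani⟩ => ?_⟩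
  exact ⟨h, (anisotropic_span_pair_iff hv h).1 hani⟩

theorem exists_mem_polar_eq_one [Finite K] {v : V} {L : Submodule K V} (hv : Q v ≠ 0)
    (hL : L ∈ externalLinesThrough Q v) : ∃ u ∈ L, polar Q v u = 1 := by
  obtain ⟨hL2, hvL, hani⟩ := hL
  rw [anisotropic_comp_subtype_iff] at hani
  have hv0 : v ≠ 0 := by rintro rfl; exact hv Q.map_zero
  have hlt : span K {v} < L := by
    refine lt_of_le_of_ne (span_le.2 (by simpa)) fun h => ?_
    rw [← h, finrank_span_singleton hv0] at hL2
    exact absurd hL2 (by norm_num)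
  obtain ⟨u₀, hu₀L, hu₀⟩ := SetLike.exists_of_lt hlt
  have hc : polar Q v u₀ ≠ 0 := by
    intro hc
    -- otherwise `s • v + u₀` with `s² = Q u₀ / Q v` would be a nonzero zero of `Q` on `L`
    obtain ⟨s, hs⟩ := isSquare_of_charTwo' (Q u₀ / Q v)
    have hzero := hani _ (add_mem (smul_mem _ s hvL) hu₀L) (by
      rw [map_smul_add, hc, ← hs, div_mul_cancel₀ _ hv, mul_zero, add_zero,
        CharTwo.add_self_eq_zero])
    exact hu₀ (mem_span_singleton.2 ⟨-s, by rwa [neg_smul, neg_eq_iff_add_eq_zero]⟩)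
  exact ⟨(polar Q v u₀)⁻¹ • u₀, smul_mem _ _ hu₀L, by
    rw [polar_smul_right, smul_eq_mul, inv_mul_cancel₀ hc]⟩

theorem externalLinesThrough_eq_image [Finite K] {v : V} (hv : Q v ≠ 0) :
    externalLinesThrough Q v = (fun u => span K {v, u}) '' externalDirections Q v := by
  ext L
  constructor
  · intro hL
    obtain ⟨u, huL, hu⟩ := exists_mem_polar_eq_one hv hL
    have hspan := (span_pair_eq_iff_mem hL.1 hL.2.1 hu).2 huL
    exact ⟨u, (mem_externalDirections_iff hv).2 ⟨hu, hspan ▸ hL⟩, hspan⟩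
  · rintro ⟨u, hu, rfl⟩
    exact ((mem_externalDirections_iff hv).1 hu).2

theorem sep_externalDirections_span_pair_eq {v u₀ : V} (hu₀ : u₀ ∈ externalDirections Q v) :
    {u ∈ externalDirections Q v | span K {v, u} = span K {v, u₀}} =
      Set.range fun a : K => a • v + u₀ := by
  ext u
  constructor
  · rintro ⟨⟨hu, -⟩, hspan⟩
    obtain ⟨a, b, rfl⟩ := mem_span_pair.1 (hspan ▸ subset_span (by simp) : u ∈ span K {v, u₀})
    have hb : b = 1 := by
      rwa [polar_smul_self_add, polar_smul_right, hu₀.1, smul_eq_mul, mul_one] at hu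
    exact ⟨a, by rw [hb, one_smul]⟩
  · rintro ⟨a, rfl⟩
    have hpolar : polar Q v (a • v + u₀) = 1 := by rw [polar_smul_self_add, hu₀.1]
    refine ⟨⟨hpolar, fun t => by rw [← add_assoc, ← add_smul]; exact hu₀.2 _⟩, ?_⟩
    refine (span_pair_eq_iff_mem (finrank_span_pair_of_polar_eq_one hu₀.1)
      (subset_span (by simp)) hpolar).2 ?_
    exact add_mem (smul_mem _ a (subset_span (by simp))) (subset_span (by simp))

theorem ncard_externalDirections_eq_card_mul [Finite K] [Finite V] {v : V} (hv : Q v ≠ 0) :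
    (externalDirections Q v).ncard = Nat.card K * (externalLinesThrough Q v).ncard := by
  classical
  have := Fintype.ofFinite V
  set D := (externalDirections Q v).toFinset
  set f : V → Submodule K V := fun u => span K {v, u}
  have hfiber : ∀ L ∈ D.image f, (D.filter fun u => f u = L).card = Nat.card K := by
    simp only [Finset.mem_image, forall_exists_index, and_imp]
    rintro - u₀ hu₀ rfl
    rw [Set.mem_toFinset] at hu₀
    rw [← Set.ncard_coe_finset, ← Set.ncard_range_of_injective (f := fun a : K => a • v + u₀),
      ← sep_externalDirections_span_pair_eq hu₀]
    · simp [D, f]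
    · intro a b hab
      exact smul_left_injective K (by rintro rfl; exact hv Q.map_zero) (add_right_cancel hab)
  have himage : f '' externalDirections Q v = ↑(D.image f) := by simp [D]
  rw [externalLinesThrough_eq_image hv, himage, Set.ncard_coe_finset, Set.ncard_eq_toFinset_card',
    Finset.card_eq_sum_card_image f D, Finset.sum_const_nat hfiber, mul_comm]

end QuadraticMap

open QuadraticMap

def hyperbolicForm (R : Type*) [CommRing R] : QuadraticForm R (Fin 4 → R) :=
  QuadraticMap.proj 0 1 + QuadraticMap.proj 2 3

@[simp]
theorem hyperbolicForm_apply {R : Type*} [CommRing R] (x : Fin 4 → R) :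
    hyperbolicForm R x = x 0 * x 1 + x 2 * x 3 :=
  rfl

theorem polar_hyperbolicForm {R : Type*} [CommRing R] (x y : Fin 4 → R) :
    polar (hyperbolicForm R) x y = x 0 * y 1 + x 1 * y 0 + x 2 * y 3 + x 3 * y 2 := by
  simp only [polar, hyperbolicForm_apply, Pi.add_apply]
  ring

theorem ncard_externalDirections_hyperbolicForm_congr {K L : Type*} [Field K] [Field L]
    (φ : K ≃+* L) (v : Fin 4 → K) :
    (externalDirections (hyperbolicForm L) (φ ∘ v)).ncard =
      (externalDirections (hyperbolicForm K) v).ncard := by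
  let ψ := RingEquiv.piCongrRight fun _ : Fin 4 => φ
  have : externalDirections (hyperbolicForm K) v = ψ ⁻¹' externalDirections (hyperbolicForm L) (ψ v) := by
    have hpolar (u : Fin 4 → K) :
        polar (hyperbolicForm L) (ψ v) (ψ u) = φ (polar (hyperbolicForm K) v u) := by
      simp [polar_hyperbolicForm, ψ]
    have hform (t : K) (u : Fin 4 → K) :
        hyperbolicForm L (φ t • ψ v + ψ u) = φ (hyperbolicForm K (t • v + u)) := by
      simp [ψ]
    ext u
    simp only [externalDirections, Set.mem_preimage, Set.mem_ofPred_eq, φ.surjective.forall,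
      hpolar, hform, map_eq_one_iff φ φ.injective, map_ne_zero]
  rw [this, Set.ncard_preimage_of_injective_subset_range ψ.injective (by simp)]
  rfl

set_option maxRecDepth 100000 in
set_option maxHeartbeats 4000000 in
theorem ncard_externalDirections_hyperbolicForm_GF4 {v : Fin 4 → GF4}
    (hv : hyperbolicForm GF4 v ≠ 0) :
    (externalDirections (hyperbolicForm GF4) v).ncard = 24 := by
  -- of the 64 vectors `u` with `B v u = 1`, 20 have `Q u = 0` and 20 have `Q u * Q v = 1`
  have hcount : ∀ v : Fin 4 → GF4, v 0 * v 1 + v 2 * v 3 ≠ 0 →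
      (Finset.univ.filter fun u : Fin 4 → GF4 =>
        v 0 * u 1 + v 1 * u 0 + v 2 * u 3 + v 3 * u 2 = 1 ∧
        (u 0 * u 1 + u 2 * u 3) * (v 0 * v 1 + v 2 * v 3) ≠ 0 ∧
        (u 0 * u 1 + u 2 * u 3) * (v 0 * v 1 + v 2 * v 3) ≠ 1).card = 24 := by
    decide
  rw [← hcount v hv, ← Set.ncard_coe_finset]
  congr 1
  ext u
  simp only [externalDirections, Set.mem_ofPred_eq, Finset.coe_filter, Finset.mem_univ, true_and,
    ← polar_hyperbolicForm, ← hyperbolicForm_apply]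
  refine and_congr_right fun hu => ?_
  simp only [map_smul_add, hu, mul_one]
  exact GF4.forall_mul_self_mul_add_add_ne_zero_iff hv _

section ProjectiveSpace

variable {F : Type} [Field F]

theorem onQuadric_span_singleton_iff (Q : QuadraticForm F (Vv F)) (v : Vv F) :
    OnQuadric F Q (span F {v}) ↔ Q v = 0 := by
  refine ⟨fun h => h v (mem_span_singleton_self v), fun h w hw => ?_⟩
  obtain ⟨c, rfl⟩ := mem_span_singleton.1 hw
  simp [QuadraticMap.map_smul, h]

theorem IsPoint.exists_eq_span_singleton {p : Submodule F (Vv F)} (hp : IsPoint F p) :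
    ∃ v ≠ 0, p = span F {v} := by
  have hp0 : p ≠ ⊥ := by
    rintro rfl
    simp [IsPoint] at hp
  obtain ⟨v, hvp, hv0⟩ := exists_mem_ne_zero_of_ne_bot hp0
  exact ⟨v, hv0, eq_span_singleton_of_mem_of_finrank_eq_one hp hvp hv0⟩

theorem forall_isPoint_not_onQuadric_iff (Q : QuadraticForm F (Vv F)) (L : Submodule F (Vv F)) :
    (∀ q, IsPoint F q → q ≤ L → ¬ OnQuadric F Q q) ↔ (Q.comp L.subtype).Anisotropic := by
  rw [anisotropic_comp_subtype_iff]
  constructor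
  · intro h w hwL hQw
    by_contra hw0
    exact h (span F {w}) (finrank_span_singleton hw0) (span_le.2 (by simpa))
      ((onQuadric_span_singleton_iff Q w).2 hQw)
  · intro h q hq hqL hOn
    obtain ⟨v, hv0, rfl⟩ := hq.exists_eq_span_singleton
    exact hv0 (h v (hqL (mem_span_singleton_self v)) ((onQuadric_span_singleton_iff Q v).1 hOn))

theorem setOf_isLine_eq_externalLinesThrough (Q : QuadraticForm F (Vv F)) (v : Vv F) :
    {L | IsLine F L ∧ span F {v} ≤ L ∧ ∀ q, IsPoint F q → q ≤ L → ¬ OnQuadric F Q q} =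
      externalLinesThrough Q v := by
  ext L
  simp only [Set.mem_ofPred_eq, externalLinesThrough, IsLine, span_singleton_le_iff_mem,
    forall_isPoint_not_onQuadric_iff]

end ProjectiveSpace

/-- Every point of `PG(3,4)` not lying on a hyperbolic quadric `H` is incident with
exactly 6 lines disjoint from `H`. -/
theorem stmt6 (F : Type) [Field F] [Fintype F] (hF : Fintype.card F = 4)
    (Q : Vv F → F) (hQ : IsHyperbolicForm F Q)
    (p : Submodule F (Vv F)) (hp : IsPoint F p) (hpH : ¬ OnQuadric F Q p) :
    {L : Submodule F (Vv F) | IsLine F L ∧ p ≤ L ∧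
      ∀ q : Submodule F (Vv F), IsPoint F q → q ≤ L → ¬ OnQuadric F Q q}.ncard
      = 6 := by
  obtain ⟨e, he⟩ := hQ
  let Q' := (hyperbolicForm F).comp e.toLinearMap
  obtain rfl : ⇑Q' = Q := funext fun x => (he x).symm
  obtain ⟨v, -, rfl⟩ := hp.exists_eq_span_singleton
  have hv : Q' v ≠ 0 := mt (onQuadric_span_singleton_iff Q' v).2 hpH
  let φ : F ≃+* GF4 := FiniteField.ringEquivOfCardEq (hF.trans GF4.card_eq.symm)
  have : CharP F 2 := charP_of_injective_ringHom (f := (φ.symm : GF4 →+* F)) φ.symm.injective 2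
  have h24 : (externalDirections Q' v).ncard = 24 := by
    rw [ncard_externalDirections_comp, ← ncard_externalDirections_hyperbolicForm_congr φ]
    exact ncard_externalDirections_hyperbolicForm_GF4 (by simpa [Q'] using (map_ne_zero φ).2 hv)
  have hcount := ncard_externalDirections_eq_card_mul hv
  rw [h24, Nat.card_eq_fintype_card, hF] at hcount
  rw [setOf_isLine_eq_externalLinesThrough]
  omega
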